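/- Let β be a nonnegative integer and α > −1 a real number. Then a_i(α,β,x) = 0 for all real x whenever i > 2β+4, and a_{2β+4}(α,β,x) = −[1/((α+1)_{β+1})] (x²−1)^{β+2} / (β+2)! for all real x. -/

import Mathlib

/-- The Pochhammer symbol (rising factorial) `(a)_k = a (a+1) ⋯ (a+k-1)`. -/
noncomputable def poch (a : ℝ) (k : ℕ) : ℝ := (ascPochhammer ℝ k).eval a

/-- The coefficient `a_i(α,β,x)` of the differential equation:
`a_i(α,β,x) = −(α+β+2) 2^i Σ_{ℓ=0}^{i−1} (−1)^ℓ [(β+3)_{i−ℓ−1} (−β−2)_{i−ℓ−1} /`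
`((α+1)_{i−ℓ−1} (i−ℓ)! (i−ℓ−1)! ℓ!)] ₃F₂(−ℓ,α+β+3,β+i−ℓ+2;α+i−ℓ,i−ℓ+1;1) ((x+1)/2)^{ℓ+1}`. -/
noncomputable def aCoef (α β : ℝ) (i : ℕ) (x : ℝ) : ℝ :=
  -(α + β + 2) * (2 : ℝ) ^ i *
    ∑ ℓ ∈ Finset.range i,
      (-1 : ℝ) ^ ℓ *
      (poch (β + 3) (i - ℓ - 1) * poch (-β - 2) (i - ℓ - 1) /
        (poch (α + 1) (i - ℓ - 1) * Nat.factorial (i - ℓ) * Nat.factorial (i - ℓ - 1) *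
          Nat.factorial ℓ)) *
      (∑ m ∈ Finset.range (ℓ + 1),
        poch (-(ℓ : ℝ)) m * poch (α + β + 3) m * poch (β + (i : ℝ) - (ℓ : ℝ) + 2) m /
          (poch (α + (i : ℝ) - (ℓ : ℝ)) m * poch ((i : ℝ) - (ℓ : ℝ) + 1) m *
            Nat.factorial m)) *
      ((x + 1) / 2) ^ (ℓ + 1)

open Polynomial Finset


lemma poch_zero (a : ℝ) : poch a 0 = 1 := by simp [poch]

lemma poch_succ (a : ℝ) (k : ℕ) : poch a (k+1) = poch a k * (a + k) :=
  ascPochhammer_succ_eval k a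

lemma poch_pos {a : ℝ} (ha : 0 < a) (k : ℕ) : 0 < poch a k := by
  induction k with
  | zero => simp [poch_zero]
  | succ n ih =>
    rw [poch_succ]
    exact mul_pos ih (by positivity)

lemma poch_add (a : ℝ) (m n : ℕ) : poch a (m + n) = poch a m * poch (a + m) n := by
  have h := ascPochhammer_mul ℝ m n
  have := congrArg (Polynomial.eval a) h
  simpa [poch, eval_comp] using this.symm

lemma poch_neg_nat (n : ℕ) : ∀ m, m ≤ n → poch (-(n:ℝ)) m = (-1)^m * (n.descFactorial m) := by
  intro m
  induction m with
  | zero => simp [poch_zero]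
  | succ m ih =>
    intro h
    have hm : m ≤ n := by omega
    rw [poch_succ, ih hm, Nat.descFactorial_succ]
    have : -(n:ℝ) + m = -((n - m : ℕ) : ℝ) := by
      push_cast [Nat.cast_sub hm]; ring
    rw [this]
    push_cast
    ring

lemma poch_neg_nat_zero (n k : ℕ) (h : n < k) : poch (-(n:ℝ)) k = 0 := by
  obtain ⟨r, rfl⟩ : ∃ r, k = (n+1) + r := ⟨k - (n+1), by omega⟩
  rw [poch_add, poch_succ]
  simp

lemma poch_nat_factorial (a m : ℕ) :
    poch ((a:ℝ)+1) m * (a.factorial : ℝ) = ((a + m).factorial : ℝ) := by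
  induction m with
  | zero => simp [poch_zero]
  | succ m ih =>
    rw [poch_succ]
    have : ((a + (m+1)).factorial : ℝ) = ((a+m).factorial : ℝ) * ((a:ℝ) + 1 + m) := by
      have : a + (m+1) = (a+m) + 1 := by omega
      rw [this, Nat.factorial_succ]
      push_cast
      ring
    rw [this, ← ih]
    ring



lemma coeff_comp_X_add_one (P : ℝ[X]) (n : ℕ) {N : ℕ} (hN : P.natDegree ≤ N) :
    (P.comp (X + 1)).coeff n = ∑ k ∈ range (N + 1), P.coeff k * (k.choose n) := by
  rw [comp_eq_sum_left]
  rw [P.sum_over_range' (by simp) (N+1) (by omega)]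
  rw [finset_sum_coeff]
  congr 1
  ext k
  rw [coeff_C_mul, coeff_X_add_one_pow]

lemma alt_sum_eval : ∀ (n : ℕ) (P : ℝ[X]), P.natDegree ≤ n →
    ∑ m ∈ range (n+1), (-1:ℝ)^m * (n.choose m) * P.eval (m:ℝ)
      = (-1)^n * n.factorial * P.coeff n := by
  intro n
  induction n with
  | zero =>
    intro P _
    simp [Polynomial.coeff_zero_eq_eval_zero]
  | succ n ih =>
    intro P hP
    set Pc := P.comp (X + 1) with hPc
    have hPc_eval : ∀ m : ℕ, Pc.eval (m:ℝ) = P.eval ((m:ℝ)+1) := by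
      intro m; simp [hPc, eval_comp]
    set Q : ℝ[X] := Pc - P with hQ
    have hQeval : ∀ m : ℕ, Q.eval (m:ℝ) = P.eval ((m:ℝ)+1) - P.eval (m:ℝ) := by
      intro m; simp [hQ, hPc_eval]
    have hPc_coeff : ∀ m : ℕ, Pc.coeff m = ∑ k ∈ range (n + 2), P.coeff k * (k.choose m) :=
      fun m => coeff_comp_X_add_one P m hP
    have hQ_succ : Q.coeff (n+1) = 0 := by
      rw [hQ, coeff_sub, hPc_coeff, Finset.sum_range_succ]
      have h0 : ∑ k ∈ range (n+1), P.coeff k * ((k.choose (n+1) : ℕ) : ℝ) = 0 :=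
        Finset.sum_eq_zero fun k hk => by
          rw [Nat.choose_eq_zero_of_lt (by simpa using hk)]; simp
      rw [h0]; simp
    have hQdeg : Q.natDegree ≤ n := by
      rw [natDegree_le_iff_coeff_eq_zero]
      intro N hN
      rcases Nat.lt_or_ge N (n+2) with h | h
      · have : N = n + 1 := by omega
        rw [this]; exact hQ_succ
      · rw [hQ, coeff_sub, hPc_coeff]
        have h1 : ∑ k ∈ range (n + 2), P.coeff k * ((k.choose N : ℕ) : ℝ) = 0 :=
          Finset.sum_eq_zero fun k hk => by
            rw [Nat.choose_eq_zero_of_lt (by simp at hk; omega)]; simp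
        rw [h1, coeff_eq_zero_of_natDegree_lt (by omega), sub_zero]
    have hQcoeff : Q.coeff n = (n+1 : ℝ) * P.coeff (n+1) := by
      rw [hQ, coeff_sub, hPc_coeff, Finset.sum_range_succ, Finset.sum_range_succ]
      have h0 : ∑ k ∈ range n, P.coeff k * ((k.choose n : ℕ) : ℝ) = 0 :=
        Finset.sum_eq_zero fun k hk => by
          rw [Nat.choose_eq_zero_of_lt (by simpa using hk)]; simp
      rw [h0, Nat.choose_self, Nat.choose_succ_self_right]
      push_cast; ring
    have key : ∑ m ∈ range (n+2), (-1:ℝ)^m * (((n+1).choose m : ℕ):ℝ) * P.eval (m:ℝ)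
        = - ∑ m ∈ range (n+1), (-1:ℝ)^m * ((n.choose m : ℕ):ℝ) * Q.eval (m:ℝ) := by
      rw [Finset.sum_range_succ']
      have h2 : ∀ m ∈ range (n+1), (-1:ℝ)^(m+1) * (((n+1).choose (m+1):ℕ):ℝ) * P.eval ((m+1:ℕ):ℝ)
          = -((-1:ℝ)^m * ((n.choose m:ℕ):ℝ) * Q.eval (m:ℝ))
            - (-1:ℝ)^m * ((n.choose m:ℕ):ℝ) * P.eval (m:ℝ)
            + (-1:ℝ)^(m+1) * ((n.choose (m+1):ℕ):ℝ) * P.eval ((m+1:ℕ):ℝ) := by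
        intro m _
        rw [hQeval, Nat.choose_succ_succ]
        push_cast; ring
      rw [Finset.sum_congr rfl h2, Finset.sum_add_distrib, Finset.sum_sub_distrib,
        Finset.sum_neg_distrib]
      have h3 : ∑ m ∈ range (n+1), (-1:ℝ)^(m+1) * ((n.choose (m+1):ℕ):ℝ) * P.eval ((m+1:ℕ):ℝ)
          = (∑ m ∈ range (n+1), (-1:ℝ)^m * ((n.choose m:ℕ):ℝ) * P.eval (m:ℝ)) - P.eval 0 := by
        have e1 := Finset.sum_range_succ'
          (fun m => (-1:ℝ)^m * ((n.choose m:ℕ):ℝ) * P.eval (m:ℝ)) (n+1)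
        have e2 := Finset.sum_range_succ
          (fun m => (-1:ℝ)^m * ((n.choose m:ℕ):ℝ) * P.eval (m:ℝ)) (n+1)
        rw [e2] at e1
        simp only [Nat.choose_succ_self, Nat.cast_zero, mul_zero, zero_mul, add_zero,
          pow_zero, Nat.choose_zero_right, Nat.cast_one, one_mul] at e1
        linarith [e1]
      rw [h3]
      simp only [pow_zero, Nat.choose_zero_right, Nat.cast_one, one_mul, Nat.cast_zero]
      ring
    rw [key, ih Q hQdeg, hQcoeff]
    rw [Nat.factorial_succ]
    push_cast [pow_succ]
    ring

lemma poch_swap {c : ℝ} (hc : 0 < c) (p m : ℕ) :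
    poch (c + p) m = poch c m * poch (c + m) p / poch c p := by
  have h1 : poch c (p + m) = poch c p * poch (c + p) m := poch_add c p m
  have h2 : poch c (m + p) = poch c m * poch (c + m) p := poch_add c m p
  rw [add_comm p m, h2] at h1
  field_simp [ne_of_gt (poch_pos hc p)]
  linarith [h1]

lemma minton (c d : ℝ) (hc : 0 < c) (hd : 0 < d) (p q n : ℕ) (hn : p + q ≤ n) :
    ∑ m ∈ range (n+1),
        poch (-(n:ℝ)) m * poch (c+p) m * poch (d+q) m /
          (poch c m * poch d m * (m.factorial : ℝ))
      = if n = p + q then (-1:ℝ)^n * (n.factorial : ℝ) / (poch c p * poch d q) else 0 := by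
  set R : ℝ[X] := ((ascPochhammer ℝ p).comp (X + C c)) * ((ascPochhammer ℝ q).comp (X + C d))
    with hRdef
  have hmon : R.Monic :=
    ((monic_ascPochhammer ℝ p).comp_X_add_C c).mul ((monic_ascPochhammer ℝ q).comp_X_add_C d)
  have hXC : ∀ r : ℝ, (X + C r).natDegree = 1 := fun r => natDegree_X_add_C r
  have hdeg : R.natDegree = p + q := by
    rw [hRdef, natDegree_mul ((monic_ascPochhammer ℝ p).comp_X_add_C c).ne_zero
      ((monic_ascPochhammer ℝ q).comp_X_add_C d).ne_zero,
      natDegree_comp, natDegree_comp, hXC, hXC, ascPochhammer_natDegree, ascPochhammer_natDegree]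
    ring
  have hReval : ∀ m : ℕ, R.eval (m:ℝ) = poch (c + m) p * poch (d + m) q := by
    intro m
    rw [hRdef]
    simp [eval_comp, poch, add_comm]
  have hstep : ∀ m ∈ range (n+1),
      poch (-(n:ℝ)) m * poch (c+p) m * poch (d+q) m /
          (poch c m * poch d m * (m.factorial : ℝ))
        = ((-1:ℝ)^m * (n.choose m) * R.eval (m:ℝ)) * (1 / (poch c p * poch d q)) := by
    intro m hm
    have hm' : m ≤ n := by simpa using Nat.lt_succ_iff.mp (Finset.mem_range.mp hm)
    rw [poch_neg_nat n m hm', poch_swap hc p m, poch_swap hd q m, hReval]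
    have hdesc : ((n.descFactorial m : ℕ) : ℝ) = (n.choose m : ℝ) * (m.factorial : ℝ) := by
      rw [Nat.descFactorial_eq_factorial_mul_choose]
      push_cast; ring
    rw [hdesc]
    have h1 := ne_of_gt (poch_pos hc m)
    have h2 := ne_of_gt (poch_pos hd m)
    have h3 := ne_of_gt (poch_pos hc p)
    have h4 := ne_of_gt (poch_pos hd q)
    have h5 : (m.factorial : ℝ) ≠ 0 := by positivity
    field_simp
  rw [Finset.sum_congr rfl hstep, ← Finset.sum_mul,
    alt_sum_eval n R (by omega : R.natDegree ≤ n)]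
  by_cases h : n = p + q
  · have : R.coeff n = 1 := by
      rw [h, ← hdeg]; exact hmon.coeff_natDegree
    rw [this, if_pos h]
    ring
  · have : R.coeff n = 0 := coeff_eq_zero_of_natDegree_lt (by omega)
    rw [this, if_neg h]
    ring

lemma inner_eq (β : ℕ) (α : ℝ) (hα : -1 < α) (i ℓ : ℕ) (hℓ : ℓ < i) (hj : i - ℓ ≤ β + 3)
    (hn : (β + 3 - (i - ℓ)) + (β + 1) ≤ ℓ) :
    ∑ m ∈ Finset.range (ℓ + 1),
        poch (-(ℓ : ℝ)) m * poch (α + (β:ℝ) + 3) m * poch ((β:ℝ) + (i : ℝ) - (ℓ : ℝ) + 2) m /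
          (poch (α + (i : ℝ) - (ℓ : ℝ)) m * poch ((i : ℝ) - (ℓ : ℝ) + 1) m *
            Nat.factorial m)
      = if ℓ = (β + 3 - (i - ℓ)) + (β + 1) then
          (-1:ℝ)^ℓ * (ℓ.factorial : ℝ) /
            (poch (α + (i:ℝ) - (ℓ:ℝ)) (β + 3 - (i - ℓ)) * poch ((i:ℝ) - (ℓ:ℝ) + 1) (β + 1))
        else 0 := by
  have hsub : ((i - ℓ : ℕ) : ℝ) = (i : ℝ) - (ℓ : ℝ) := by
    push_cast [Nat.cast_sub hℓ.le]; ring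
  have hsub2 : ((β + 3 - (i - ℓ) : ℕ) : ℝ) = (β : ℝ) + 3 - ((i:ℝ) - (ℓ:ℝ)) := by
    push_cast [Nat.cast_sub hj, Nat.cast_sub hℓ.le]; ring
  have hone : 1 ≤ i - ℓ := by omega
  have hc : (0:ℝ) < α + ((i - ℓ : ℕ):ℝ) := by
    have : (1:ℝ) ≤ ((i - ℓ : ℕ):ℝ) := by exact_mod_cast hone
    linarith
  have hd : (0:ℝ) < ((i - ℓ : ℕ):ℝ) + 1 := by positivity
  have h := minton (α + ((i - ℓ : ℕ):ℝ)) (((i - ℓ : ℕ):ℝ) + 1) hc hd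
    (β + 3 - (i - ℓ)) (β + 1) ℓ hn
  have e1 : α + ((i - ℓ : ℕ):ℝ) + ((β + 3 - (i - ℓ) : ℕ):ℝ) = α + (β:ℝ) + 3 := by
    rw [hsub, hsub2]; ring
  have e2 : ((i - ℓ : ℕ):ℝ) + 1 + ((β + 1 : ℕ):ℝ) = (β:ℝ) + (i : ℝ) - (ℓ : ℝ) + 2 := by
    rw [hsub]; push_cast; ring
  have e3 : α + ((i - ℓ : ℕ):ℝ) = α + (i:ℝ) - (ℓ:ℝ) := by rw [hsub]; ring
  have e4 : ((i - ℓ : ℕ):ℝ) + 1 = (i:ℝ) - (ℓ:ℝ) + 1 := by rw [hsub]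
  rw [e1, e2] at h
  rw [e3, e4] at h
  exact h

theorem part1 (β : ℕ) (α : ℝ) (hα : -1 < α) :
    ∀ i : ℕ, 2 * β + 4 < i → ∀ x : ℝ, aCoef α (β : ℝ) i x = 0 := by
  intro i hi x
  unfold aCoef
  rw [show (∑ ℓ ∈ Finset.range i,
      (-1 : ℝ) ^ ℓ *
      (poch ((β:ℝ) + 3) (i - ℓ - 1) * poch (-(β:ℝ) - 2) (i - ℓ - 1) /
        (poch (α + 1) (i - ℓ - 1) * Nat.factorial (i - ℓ) * Nat.factorial (i - ℓ - 1) *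
          Nat.factorial ℓ)) *
      (∑ m ∈ Finset.range (ℓ + 1),
        poch (-(ℓ : ℝ)) m * poch (α + (β:ℝ) + 3) m * poch ((β:ℝ) + (i : ℝ) - (ℓ : ℝ) + 2) m /
          (poch (α + (i : ℝ) - (ℓ : ℝ)) m * poch ((i : ℝ) - (ℓ : ℝ) + 1) m *
            Nat.factorial m)) *
      ((x + 1) / 2) ^ (ℓ + 1)) = 0 from ?_, mul_zero]
  apply Finset.sum_eq_zero
  intro ℓ hℓmem
  have hℓ : ℓ < i := Finset.mem_range.mp hℓmem
  by_cases hcase : β + 2 < i - ℓ - 1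
  · have hz : poch (-(β:ℝ) - 2) (i - ℓ - 1) = 0 := by
      have : -(β:ℝ) - 2 = -(((β + 2 : ℕ)):ℝ) := by push_cast; ring
      rw [this]
      exact poch_neg_nat_zero (β+2) _ hcase
    rw [hz]
    ring
  · have hj : i - ℓ ≤ β + 3 := by omega
    have hn : (β + 3 - (i - ℓ)) + (β + 1) ≤ ℓ := by omega
    rw [inner_eq β α hα i ℓ hℓ hj hn, if_neg (by omega)]
    ring

theorem part2 (β : ℕ) (α : ℝ) (hα : -1 < α) (x : ℝ) :
    aCoef α (β : ℝ) (2 * β + 4) x =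
      -(1 / poch (α + 1) (β + 1)) * (x ^ 2 - 1) ^ (β + 2) / Nat.factorial (β + 2) := by
  have hα1 : (0:ℝ) < α + 1 := by linarith
  unfold aCoef
  rw [show 2*β+4 = (β+1)+(β+3) from by omega]
  set y : ℝ := (x + 1) / 2 with hy
  rw [Finset.sum_range_add]
  -- first chunk is zero
  have hz1 : ∑ ℓ ∈ Finset.range (β+1),
      (-1 : ℝ) ^ ℓ *
      (poch ((β:ℝ) + 3) ((β+1)+(β+3) - ℓ - 1) * poch (-(β:ℝ) - 2) ((β+1)+(β+3) - ℓ - 1) /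
        (poch (α + 1) ((β+1)+(β+3) - ℓ - 1) * Nat.factorial ((β+1)+(β+3) - ℓ) *
          Nat.factorial ((β+1)+(β+3) - ℓ - 1) * Nat.factorial ℓ)) *
      (∑ m ∈ Finset.range (ℓ + 1),
        poch (-(ℓ : ℝ)) m * poch (α + (β:ℝ) + 3) m *
            poch ((β:ℝ) + (((β+1)+(β+3) : ℕ) : ℝ) - (ℓ : ℝ) + 2) m /
          (poch (α + (((β+1)+(β+3) : ℕ) : ℝ) - (ℓ : ℝ)) m *
            poch ((((β+1)+(β+3) : ℕ) : ℝ) - (ℓ : ℝ) + 1) m * Nat.factorial m)) *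
      y ^ (ℓ + 1) = 0 := by
    apply Finset.sum_eq_zero
    intro ℓ hℓ
    have hℓ' : ℓ < β + 1 := Finset.mem_range.mp hℓ
    have hz : poch (-(β:ℝ) - 2) ((β+1)+(β+3) - ℓ - 1) = 0 := by
      have e : -(β:ℝ) - 2 = -(((β + 2 : ℕ)):ℝ) := by push_cast; ring
      rw [e]
      exact poch_neg_nat_zero (β+2) _ (by omega)
    rw [hz]
    ring
  rw [hz1]
  -- second chunk
  have hterm : ∀ k ∈ Finset.range (β+3),
      (-1 : ℝ) ^ (β+1+k) *
      (poch ((β:ℝ) + 3) ((β+1)+(β+3) - (β+1+k) - 1) *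
          poch (-(β:ℝ) - 2) ((β+1)+(β+3) - (β+1+k) - 1) /
        (poch (α + 1) ((β+1)+(β+3) - (β+1+k) - 1) * Nat.factorial ((β+1)+(β+3) - (β+1+k)) *
          Nat.factorial ((β+1)+(β+3) - (β+1+k) - 1) * Nat.factorial (β+1+k))) *
      (∑ m ∈ Finset.range ((β+1+k) + 1),
        poch (-(((β+1+k) : ℕ) : ℝ)) m * poch (α + (β:ℝ) + 3) m *
            poch ((β:ℝ) + (((β+1)+(β+3) : ℕ) : ℝ) - (((β+1+k) : ℕ) : ℝ) + 2) m /
          (poch (α + (((β+1)+(β+3) : ℕ) : ℝ) - (((β+1+k) : ℕ) : ℝ)) m *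
            poch ((((β+1)+(β+3) : ℕ) : ℝ) - (((β+1+k) : ℕ) : ℝ) + 1) m * Nat.factorial m)) *
      y ^ ((β+1+k) + 1)
      = (y^(β+2) / (poch (α+1) (β+2) * ((β+2).factorial : ℝ))) *
          ((((β+2).choose k : ℕ) : ℝ) * ((-1:ℝ)^(β+k) * y^k)) := by
    intro k hk
    have hk' : k ≤ β + 2 := by have := Finset.mem_range.mp hk; omega
    -- inner sum
    rw [inner_eq β α hα ((β+1)+(β+3)) (β+1+k) (by omega) (by omega) (by omega)]
    rw [if_pos (show β+1+k = β + 3 - ((β+1)+(β+3) - (β+1+k)) + (β + 1) from by omega)]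
    rw [show β + 3 - ((β+1)+(β+3) - (β+1+k)) = k from by omega]
    rw [show (β+1)+(β+3) - (β+1+k) = β+3-k from by omega]
    rw [show β+3-k-1 = β+2-k from by omega]
    rw [show α + ((((β+1)+(β+3)) : ℕ) : ℝ) - (((β+1+k) : ℕ) : ℝ) = α + ((β+3-k : ℕ) : ℝ)
      from by push_cast [Nat.cast_sub (show k ≤ β+3 from by omega)]; ring]
    rw [show ((((β+1)+(β+3)) : ℕ) : ℝ) - (((β+1+k) : ℕ) : ℝ) + 1 = ((β+3-k : ℕ) : ℝ) + 1
      from by push_cast [Nat.cast_sub (show k ≤ β+3 from by omega)]; ring]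
    -- pochhammer identities (as division forms)
    have hfac2 : (((β+2).factorial : ℕ) : ℝ) ≠ 0 := by positivity
    have B1 : poch ((β:ℝ)+3) (β+2-k)
        = (((2*β+4-k).factorial : ℕ) : ℝ) / (((β+2).factorial : ℕ) : ℝ) := by
      rw [eq_div_iff hfac2]
      have h := poch_nat_factorial (β+2) (β+2-k)
      rw [show (((β+2 : ℕ)):ℝ) + 1 = (β:ℝ) + 3 from by push_cast; ring] at h
      rw [show (β+2) + (β+2-k) = 2*β+4-k from by omega] at h
      exact h
    have hkfac : ((k.factorial : ℕ) : ℝ) ≠ 0 := by positivity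
    have B2 : poch (-(β:ℝ)-2) (β+2-k)
        = (-1:ℝ)^(β+k) * ((((β+2).factorial : ℕ) : ℝ) / ((k.factorial : ℕ) : ℝ)) := by
      have hA2 : poch (-(β:ℝ)-2) (β+2-k)
          = (-1:ℝ)^(β+2-k) * (((β+2).descFactorial (β+2-k) : ℕ) : ℝ) := by
        have e : -(β:ℝ) - 2 = -(((β + 2 : ℕ)):ℝ) := by push_cast; ring
        rw [e]
        exact poch_neg_nat (β+2) (β+2-k) (by omega)
      have hsign : (-1:ℝ)^(β+2-k) = (-1:ℝ)^(β+k) := by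
        calc (-1:ℝ)^(β+2-k) = (-1:ℝ)^(β+2-k) * ((-1:ℝ)^(k+k)) := by
              rw [Even.neg_one_pow ⟨k, rfl⟩, mul_one]
          _ = (-1:ℝ)^((β+2-k)+(k+k)) := (pow_add _ _ _).symm
          _ = (-1:ℝ)^((β+k)+2) := by rw [show (β+2-k)+(k+k) = (β+k)+2 from by omega]
          _ = (-1:ℝ)^(β+k) * (-1:ℝ)^2 := pow_add _ _ _
          _ = (-1:ℝ)^(β+k) := by norm_num
      have hdf : (((β+2).descFactorial (β+2-k) : ℕ) : ℝ)
          = (((β+2).factorial : ℕ) : ℝ) / ((k.factorial : ℕ) : ℝ) := by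
        rw [eq_div_iff hkfac]
        have h := Nat.factorial_mul_descFactorial (show β+2-k ≤ β+2 from by omega)
        rw [show β+2-(β+2-k) = k from by omega] at h
        exact_mod_cast congrArg (fun n : ℕ => (n : ℝ)) (by rw [← h]; ring)
      rw [hA2, hsign, hdf]
    have hP1 : (0:ℝ) < poch (α + ((β+3-k : ℕ) : ℝ)) k := by
      apply poch_pos
      have : (1:ℝ) ≤ ((β+3-k : ℕ) : ℝ) := by exact_mod_cast (show 1 ≤ β+3-k from by omega)
      linarith
    have B3 : poch (α+1) (β+2-k) = poch (α+1) (β+2) / poch (α + ((β+3-k : ℕ) : ℝ)) k := by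
      rw [eq_div_iff (ne_of_gt hP1)]
      have h := poch_add (α+1) (β+2-k) k
      rw [show (β+2-k)+k = β+2 from by omega] at h
      rw [show α + 1 + ((β+2-k : ℕ) : ℝ) = α + ((β+3-k : ℕ) : ℝ) from by
        push_cast [Nat.cast_sub (show k ≤ β+2 from by omega),
          Nat.cast_sub (show k ≤ β+3 from by omega)]; ring] at h
      exact h.symm
    have hf1 : (((β+3-k).factorial : ℕ) : ℝ) ≠ 0 := by positivity
    have B4 : poch (((β+3-k : ℕ) : ℝ) + 1) (β+1)
        = (((2*β+4-k).factorial : ℕ) : ℝ) / (((β+3-k).factorial : ℕ) : ℝ) := by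
      rw [eq_div_iff hf1]
      have h := poch_nat_factorial (β+3-k) (β+1)
      rw [show (β+3-k) + (β+1) = 2*β+4-k from by omega] at h
      exact h
    have hf2 : (((β+2-k).factorial : ℕ) : ℝ) ≠ 0 := by positivity
    have B5 : ((((β+2).choose k : ℕ)) : ℝ)
        = (((β+2).factorial : ℕ) : ℝ) / (((k.factorial : ℕ)) * (((β+2-k).factorial : ℕ)) : ℝ) := by
      rw [eq_div_iff (by positivity)]
      exact_mod_cast (by rw [← Nat.choose_mul_factorial_mul_factorial hk']; ring :
        (β+2).choose k * (k.factorial * (β+2-k).factorial) = (β+2).factorial)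
    rw [B1, B2, B3, B4, B5]
    have hsneg : (-1:ℝ)^(β+1+k) = -((-1:ℝ)^(β+k)) := by
      rw [show β+1+k = (β+k)+1 from by omega, pow_succ]; ring
    rw [hsneg]
    have hQ : (0:ℝ) < poch (α+1) (β+2) := poch_pos hα1 _
    have hfacl : (((β+1+k).factorial : ℕ) : ℝ) ≠ 0 := by positivity
    have hfacbig : (((2*β+4-k).factorial : ℕ) : ℝ) ≠ 0 := by positivity
    rcases Nat.even_or_odd (β+k) with hpar | hpar
    · rw [hpar.neg_one_pow]
      field_simp
      ring
    · rw [hpar.neg_one_pow]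
      field_simp
      ring
  rw [Finset.sum_congr rfl hterm, ← Finset.mul_sum]
  -- binomial theorem
  have hbin0 : ∑ k ∈ Finset.range (β+3), ((((β+2).choose k : ℕ)) : ℝ) * (-y)^k
      = (1-y)^(β+2) := by
    have h := add_pow (-y) (1:ℝ) (β+2)
    simp only [one_pow, mul_one] at h
    rw [show ((1:ℝ)-y) = -y + 1 from by ring, h, show β+2+1 = β+3 from by omega]
    exact Finset.sum_congr rfl fun k _ => by ring
  have hbin : ∑ k ∈ Finset.range (β+3),
      ((((β+2).choose k : ℕ)) : ℝ) * ((-1:ℝ)^(β+k) * y^k) = (-1:ℝ)^β * (1-y)^(β+2) := by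
    have h1 : ∀ k ∈ Finset.range (β+3),
        ((((β+2).choose k : ℕ)) : ℝ) * ((-1:ℝ)^(β+k) * y^k)
          = (-1:ℝ)^β * (((((β+2).choose k : ℕ)) : ℝ) * (-y)^k) := by
      intro k _
      have hny : (-y)^k = (-1:ℝ)^k * y^k := by rw [neg_pow]
      rw [hny, pow_add]
      ring
    rw [Finset.sum_congr rfl h1, ← Finset.mul_sum, hbin0]
  rw [hbin]
  -- final algebra
  have hQsplit : poch (α+1) (β+2) = poch (α+1) (β+1) * (α+(β:ℝ)+2) := by
    have h := poch_succ (α+1) (β+1)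
    rw [show β+1+1 = β+2 from by omega] at h
    rw [h]
    push_cast; ring
  have hpow : ((x:ℝ)^2 - 1)^(β+2)
      = (2:ℝ)^((β+1)+(β+3)) * ((-1:ℝ)^β * (y^(β+2) * (1-y)^(β+2))) := by
    have h1 : (x^2 - 1 : ℝ) = (-1) * (4 * (y * (1-y))) := by rw [hy]; ring
    have h2 : ((-1:ℝ))^(β+2) = (-1:ℝ)^β := by rw [pow_add]; norm_num
    have h4 : (2:ℝ)^((β+1)+(β+3)) = (4:ℝ)^(β+2) := by
      rw [show (β+1)+(β+3) = 2*(β+2) from by omega, pow_mul]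
      norm_num
    calc ((x:ℝ)^2 - 1)^(β+2) = ((-1) * (4 * (y * (1-y))))^(β+2) := by rw [h1]
      _ = (-1:ℝ)^(β+2) * ((4:ℝ)^(β+2) * (y^(β+2) * (1-y)^(β+2))) := by
          rw [mul_pow, mul_pow, mul_pow]
      _ = (2:ℝ)^((β+1)+(β+3)) * ((-1:ℝ)^β * (y^(β+2) * (1-y)^(β+2))) := by
          rw [h2, h4]; ring
  rw [hpow, hQsplit]
  have h5 : poch (α+1) (β+1) ≠ 0 := ne_of_gt (poch_pos hα1 _)
  have h6 : α + (β:ℝ) + 2 ≠ 0 := by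
    have hb : (0:ℝ) ≤ (β:ℝ) := Nat.cast_nonneg β
    have : (0:ℝ) < α + (β:ℝ) + 2 := by linarith
    exact ne_of_gt this
  have h7 : (((β+2).factorial : ℕ) : ℝ) ≠ 0 := by positivity
  field_simp
  ring

/-- for a nonnegative integer `β` the coefficients `a_i(α,β,x)` vanish
for `i > 2β+4`, and `a_{2β+4}(α,β,x) = −[1/((α+1)_{β+1})] (x²−1)^{β+2} / (β+2)!`. -/
theorem aCoef_vanishing_and_top (β : ℕ) (α : ℝ) (hα : -1 < α) :
    (∀ i : ℕ, 2 * β + 4 < i → ∀ x : ℝ, aCoef α (β : ℝ) i x = 0) ∧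
    (∀ x : ℝ, aCoef α (β : ℝ) (2 * β + 4) x =
      -(1 / poch (α + 1) (β + 1)) * (x ^ 2 - 1) ^ (β + 2) / Nat.factorial (β + 2)) :=
  ⟨part1 β α hα, fun x => part2 β α hα x⟩
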